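/- Define F(x,y,z) = ((1+z)^{1+y}(1-z)^{1-y})/((1+x)^{1+y}(1-x)^{1-y}) and, for -1 < ρ₁ < ρ₂ < 1 and a ∈ (-1,1), let M(a) = sup_{ρ₁<ρ<ρ₂} F(ρ,a,ρ₁) and m(a) = inf_{ρ₁<ρ<ρ₂} F(ρ,a,ρ₁). Let a₀ ∈ (ρ₁,ρ₂) be the unique point with F(ρ₂,a₀,ρ₁) = 1. Then the function a ↦ M(a)/m(a) on (-1,1) is strictly decreasing on (-1,a₀), strictly increasing on (a₀,1), and attains a unique global minimum at a = a₀. -/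

import Mathlib

open Real

/-- `F(x,y,z) = ((1+z)^{1+y}(1-z)^{1-y}) / ((1+x)^{1+y}(1-x)^{1-y})`, real powers. -/
noncomputable def F (x y z : ℝ) : ℝ :=
  ((1 + z) ^ (1 + y) * (1 - z) ^ (1 - y)) / ((1 + x) ^ (1 + y) * (1 - x) ^ (1 - y))

/-- `M(a) = sup_{ρ₁<ρ<ρ₂} F(ρ,a,ρ₁)`. -/
noncomputable def Msup (ρ₁ ρ₂ a : ℝ) : ℝ := sSup ((fun ρ => F ρ a ρ₁) '' Set.Ioo ρ₁ ρ₂)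

/-- `m(a) = inf_{ρ₁<ρ<ρ₂} F(ρ,a,ρ₁)`. -/
noncomputable def minf (ρ₁ ρ₂ a : ℝ) : ℝ := sInf ((fun ρ => F ρ a ρ₁) '' Set.Ioo ρ₁ ρ₂)

/-!
With `g_a(t) = (1+a) log(1+t) + (1-a) log(1-t)` one has `F(ρ,a,ρ₁) = exp(g_a(ρ₁) - g_a(ρ))`, so
`M(a)/m(a) = exp(sup g_a - inf g_a)`, extrema over `[ρ₁,ρ₂]`. Each `g_a` is concave, so its
infimum sits at an endpoint: at `ρ₂` when `a ≤ a₀` and at `ρ₁` when `a ≥ a₀`, `a₀` being the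
parameter at which the two endpoint values agree. As `g_a` is affine in `a` with slope
`log(1+t) - log(1-t)`, increasing in `t`, every difference `g_a(s) - g_a(ρ₂)` with `s < ρ₂`
strictly decreases in `a`; evaluating at a maximiser for the larger parameter shows that
`sup g_a - g_a(ρ₂)` strictly decreases on `a ≤ a₀`. The side `a ≥ a₀` is symmetric.
-/

open Set

section SupInf

variable {α β : Type*} [ConditionallyCompleteLinearOrder α] [TopologicalSpace α] [OrderTopology α]
  [DenselyOrdered α] [ConditionallyCompleteLinearOrder β] [TopologicalSpace β] [OrderTopology β]
  {f : α → β} {a b : α}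

lemma ContinuousOn.csSup_image_Ioo (hab : a < b) (hf : ContinuousOn f (Icc a b)) :
    sSup (f '' Ioo a b) = sSup (f '' Icc a b) := by
  have hclosure : f '' Icc a b ⊆ closure (f '' Ioo a b) := by
    rw [← closure_Ioo hab.ne] at hf ⊢
    exact hf.image_closure
  exact ((isLUB_iff_of_subset_of_subset_closure (image_mono Ioo_subset_Icc_self) hclosure).2
    (isLUB_csSup ((nonempty_Icc.2 hab.le).image f) (isCompact_Icc.bddAbove_image hf))).csSup_eq
    ((nonempty_Ioo.2 hab).image f)

lemma ContinuousOn.csInf_image_Ioo (hab : a < b) (hf : ContinuousOn f (Icc a b)) :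
    sInf (f '' Ioo a b) = sInf (f '' Icc a b) :=
  ContinuousOn.csSup_image_Ioo (β := βᵒᵈ) hab hf

end SupInf

section MinimumPrinciple

variable {𝕜 β : Type*} [Field 𝕜] [LinearOrder 𝕜] [IsStrictOrderedRing 𝕜] [AddCommGroup β]
  [LinearOrder β] [IsOrderedAddMonoid β] [Module 𝕜 β] [IsStrictOrderedModule 𝕜 β]
  {s : Set 𝕜} {f : 𝕜 → β} {x y : 𝕜}

lemma ConcaveOn.isMinOn_Icc_left (hf : ConcaveOn 𝕜 s f) (hx : x ∈ s) (hy : y ∈ s)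
    (hxy : f x ≤ f y) : IsMinOn f (Icc x y) x := fun _ hz =>
  (min_eq_left hxy).symm.trans_le (hf.min_le_of_mem_Icc hx hy hz)

lemma ConcaveOn.isMinOn_Icc_right (hf : ConcaveOn 𝕜 s f) (hx : x ∈ s) (hy : y ∈ s)
    (hxy : f y ≤ f x) : IsMinOn f (Icc x y) y := fun _ hz =>
  (min_eq_right hxy).symm.trans_le (hf.min_le_of_mem_Icc hx hy hz)

end MinimumPrinciple

lemma IsCompact.sSup_sub_sInf_image_lt {X : Type*} [TopologicalSpace X] {S : Set X}
    (hS : IsCompact S) {f g : X → ℝ} (hf : ContinuousOn f S) (hg : ContinuousOn g S) {e : X}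
    (he : e ∈ S) (hfe : IsMinOn f S e) (hge : IsMinOn g S e)
    (hlt : ∀ s ∈ S, s ≠ e → f s - f e < g s - g e) (hS' : ∃ s ∈ S, s ≠ e) :
    sSup (f '' S) - sInf (f '' S) < sSup (g '' S) - sInf (g '' S) := by
  have hf_inf : sInf (f '' S) = f e := (hfe.isGLB he).csInf_eq ⟨f e, e, he, rfl⟩
  have hg_inf : sInf (g '' S) = g e := (hge.isGLB he).csInf_eq ⟨g e, e, he, rfl⟩
  rw [hf_inf, hg_inf]
  have hg_le : ∀ s ∈ S, g s - g e ≤ sSup (g '' S) - g e := fun s hs =>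
    sub_le_sub_right (le_csSup (hS.bddAbove_image hg) (mem_image_of_mem g hs)) _
  obtain ⟨m, hm, hfm⟩ := hS.exists_isMaxOn ⟨e, he⟩ hf
  have hf_sup : sSup (f '' S) = f m := (hfm.isLUB hm).csSup_eq ⟨f m, m, hm, rfl⟩
  rw [hf_sup]
  by_cases hme : m = e
  · obtain ⟨s, hs, hse⟩ := hS'
    calc f m - f e = 0 := by rw [hme, sub_self]
      _ ≤ f s - f e := sub_nonneg.2 (hfe hs)
      _ < g s - g e := hlt s hs hse
      _ ≤ _ := hg_le s hs
  · exact (hlt m hm hme).trans_le (hg_le m hm)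

noncomputable def logProfile (a t : ℝ) : ℝ := (1 + a) * log (1 + t) + (1 - a) * log (1 - t)

lemma F_eq_exp {x z : ℝ} (hx : x ∈ Ioo (-1) 1) (hz : z ∈ Ioo (-1) 1) (y : ℝ) :
    F x y z = exp (logProfile y z - logProfile y x) := by
  have hx₁ : 0 < 1 + x := by linarith [hx.1]
  have hx₂ : 0 < 1 - x := by linarith [hx.2]
  have hz₁ : 0 < 1 + z := by linarith [hz.1]
  have hz₂ : 0 < 1 - z := by linarith [hz.2]
  rw [F, logProfile, logProfile, rpow_def_of_pos hz₁, rpow_def_of_pos hz₂, rpow_def_of_pos hx₁,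
    rpow_def_of_pos hx₂, ← exp_add, ← exp_add, ← exp_sub]
  ring_nf

lemma concaveOn_logProfile {a : ℝ} (ha : a ∈ Icc (-1) 1) :
    ConcaveOn ℝ (Ioo (-1) 1) (logProfile a) := by
  have hplus : ConcaveOn ℝ (Ioo (-1) 1) (fun t => log (1 + t)) :=
    (strictConcaveOn_log_Ioi.concaveOn.translate_right 1).subset
      (fun t ht => by simp; linarith [ht.1]) (convex_Ioo _ _)
  have hminus : ConcaveOn ℝ (Ioo (-1) 1) (fun t => log (1 - t)) :=
    ((strictConcaveOn_log_Ioi.concaveOn.comp_affineMap (AffineMap.lineMap 1 0)).subset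
      (fun t ht => by simp [AffineMap.lineMap_apply]; linarith [ht.2]) (convex_Ioo _ _)).congr
      (fun t _ => by simp [AffineMap.lineMap_apply, neg_add_eq_sub])
  exact (hplus.smul (by linarith [ha.1])).add (hminus.smul (by linarith [ha.2]))

lemma continuousOn_logProfile (a : ℝ) : ContinuousOn (logProfile a) (Ioo (-1) 1) := by
  intro t ht
  have : 1 + t ≠ 0 := by linarith [ht.1]
  have : 1 - t ≠ 0 := by linarith [ht.2]
  unfold logProfile
  fun_prop (disch := assumption)

lemma logProfile_sub_lt_logProfile_sub {a b s t : ℝ} (hab : a < b) (hs : -1 < s) (hst : s < t)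
    (ht : t < 1) : logProfile a t - logProfile a s < logProfile b t - logProfile b s := by
  have h₁ : log (1 + s) < log (1 + t) := log_lt_log (by linarith) (by linarith)
  have h₂ : log (1 - t) < log (1 - s) := log_lt_log (by linarith) (by linarith)
  have key : (logProfile b t - logProfile b s) - (logProfile a t - logProfile a s) =
      (b - a) * ((log (1 + t) - log (1 + s)) + (log (1 - s) - log (1 - t))) := by
    simp only [logProfile]; ring
  rw [← sub_pos, key]
  exact mul_pos (sub_pos.2 hab) (by linarith)

noncomputable def logRatio (ρ₁ ρ₂ a : ℝ) : ℝ :=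
  sSup (logProfile a '' Icc ρ₁ ρ₂) - sInf (logProfile a '' Icc ρ₁ ρ₂)

lemma Msup_div_minf_eq_exp_logRatio {ρ₁ ρ₂ : ℝ} (h1 : -1 < ρ₁) (h2 : ρ₁ < ρ₂) (h3 : ρ₂ < 1)
    (a : ℝ) : Msup ρ₁ ρ₂ a / minf ρ₁ ρ₂ a = exp (logRatio ρ₁ ρ₂ a) := by
  set g := logProfile a
  set φ : ℝ → ℝ := fun u => exp (g ρ₁ - u)
  have hφ : Antitone φ := fun u v huv => exp_le_exp.2 (by linarith)
  have hIcc : Icc ρ₁ ρ₂ ⊆ Ioo (-1) 1 := Icc_subset_Ioo h1 h3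
  have hg : ContinuousOn g (Icc ρ₁ ρ₂) := (continuousOn_logProfile a).mono hIcc
  have hF : (fun ρ => F ρ a ρ₁) '' Ioo ρ₁ ρ₂ = φ '' (g '' Ioo ρ₁ ρ₂) := by
    rw [image_image]
    exact image_congr fun ρ hρ =>
      F_eq_exp (hIcc (Ioo_subset_Icc_self hρ)) (hIcc (left_mem_Icc.2 h2.le)) a
  have hne : (g '' Ioo ρ₁ ρ₂).Nonempty := (nonempty_Ioo.2 h2).image g
  have hbdd : Bornology.IsBounded (g '' Ioo ρ₁ ρ₂) :=
    (isCompact_Icc.image_of_continuousOn hg).isBounded.subset (image_mono Ioo_subset_Icc_self)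
  rw [Msup, minf, hF, ← hφ.map_csInf_of_continuousAt (by fun_prop) hne hbdd.bddBelow,
    ← hφ.map_csSup_of_continuousAt (by fun_prop) hne hbdd.bddAbove, ← exp_sub,
    hg.csSup_image_Ioo h2, hg.csInf_image_Ioo h2, logRatio]
  congr 1
  ring

lemma logRatio_lt_logRatio_of_le_left {ρ₁ ρ₂ a b : ℝ} (h1 : -1 < ρ₁) (h2 : ρ₁ < ρ₂) (h3 : ρ₂ < 1)
    (ha : -1 < a) (hab : a < b) (hb : b < 1) (hb₀ : logProfile b ρ₂ ≤ logProfile b ρ₁) :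
    logRatio ρ₁ ρ₂ b < logRatio ρ₁ ρ₂ a := by
  have hIcc : Icc ρ₁ ρ₂ ⊆ Ioo (-1) 1 := Icc_subset_Ioo h1 h3
  have hρ₁ := hIcc (left_mem_Icc.2 h2.le)
  have hρ₂ := hIcc (right_mem_Icc.2 h2.le)
  have hconc_a := concaveOn_logProfile (a := a) ⟨ha.le, by linarith⟩
  have hconc_b := concaveOn_logProfile (a := b) ⟨by linarith, hb.le⟩
  have ha₀ : logProfile a ρ₂ ≤ logProfile a ρ₁ := by
    linarith [logProfile_sub_lt_logProfile_sub hab h1 h2 h3]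
  refine isCompact_Icc.sSup_sub_sInf_image_lt ((continuousOn_logProfile b).mono hIcc)
    ((continuousOn_logProfile a).mono hIcc) (right_mem_Icc.2 h2.le)
    (hconc_b.isMinOn_Icc_right hρ₁ hρ₂ hb₀) (hconc_a.isMinOn_Icc_right hρ₁ hρ₂ ha₀) ?_
    ⟨ρ₁, left_mem_Icc.2 h2.le, h2.ne⟩
  intro s hs hsρ₂
  linarith [logProfile_sub_lt_logProfile_sub hab (h1.trans_le hs.1) (hs.2.lt_of_ne hsρ₂) h3]

lemma logRatio_lt_logRatio_of_le_right {ρ₁ ρ₂ a b : ℝ} (h1 : -1 < ρ₁) (h2 : ρ₁ < ρ₂) (h3 : ρ₂ < 1)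
    (ha : -1 < a) (hab : a < b) (hb : b < 1) (ha₀ : logProfile a ρ₁ ≤ logProfile a ρ₂) :
    logRatio ρ₁ ρ₂ a < logRatio ρ₁ ρ₂ b := by
  have hIcc : Icc ρ₁ ρ₂ ⊆ Ioo (-1) 1 := Icc_subset_Ioo h1 h3
  have hρ₁ := hIcc (left_mem_Icc.2 h2.le)
  have hρ₂ := hIcc (right_mem_Icc.2 h2.le)
  have hconc_a := concaveOn_logProfile (a := a) ⟨ha.le, by linarith⟩
  have hconc_b := concaveOn_logProfile (a := b) ⟨by linarith, hb.le⟩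
  have hb₀ : logProfile b ρ₁ ≤ logProfile b ρ₂ := by
    linarith [logProfile_sub_lt_logProfile_sub hab h1 h2 h3]
  refine isCompact_Icc.sSup_sub_sInf_image_lt ((continuousOn_logProfile a).mono hIcc)
    ((continuousOn_logProfile b).mono hIcc) (left_mem_Icc.2 h2.le)
    (hconc_a.isMinOn_Icc_left hρ₁ hρ₂ ha₀) (hconc_b.isMinOn_Icc_left hρ₁ hρ₂ hb₀) ?_
    ⟨ρ₂, right_mem_Icc.2 h2.le, h2.ne'⟩
  intro s hs hsρ₁
  exact logProfile_sub_lt_logProfile_sub hab h1 (hs.1.lt_of_ne' hsρ₁) (hs.2.trans_lt h3)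

theorem ratio_min_at_a₀ (ρ₁ ρ₂ a₀ : ℝ) (h1 : -1 < ρ₁) (h2 : ρ₁ < ρ₂) (h3 : ρ₂ < 1)
    (ha₀ : ρ₁ < a₀) (ha₀' : a₀ < ρ₂) (hroot : F ρ₂ a₀ ρ₁ = 1) :
    StrictAntiOn (fun a => Msup ρ₁ ρ₂ a / minf ρ₁ ρ₂ a) (Set.Ioo (-1 : ℝ) a₀) ∧
    StrictMonoOn (fun a => Msup ρ₁ ρ₂ a / minf ρ₁ ρ₂ a) (Set.Ioo a₀ 1) ∧
    ∀ a ∈ Set.Ioo (-1 : ℝ) 1, a ≠ a₀ →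
      Msup ρ₁ ρ₂ a₀ / minf ρ₁ ρ₂ a₀ < Msup ρ₁ ρ₂ a / minf ρ₁ ρ₂ a := by
  have hIcc : Icc ρ₁ ρ₂ ⊆ Ioo (-1) 1 := Icc_subset_Ioo h1 h3
  have hbalance : logProfile a₀ ρ₁ = logProfile a₀ ρ₂ := by
    rw [F_eq_exp (hIcc (right_mem_Icc.2 h2.le)) (hIcc (left_mem_Icc.2 h2.le)), exp_eq_one_iff,
      sub_eq_zero] at hroot
    exact hroot
  have hanti : StrictAntiOn (logRatio ρ₁ ρ₂) (Ioc (-1) a₀) := fun a ha b hb hab => by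
    refine logRatio_lt_logRatio_of_le_left h1 h2 h3 ha.1 hab (by linarith [hb.2]) ?_
    rcases hb.2.eq_or_lt with rfl | hb₀
    · exact hbalance.ge
    · linarith [logProfile_sub_lt_logProfile_sub hb₀ h1 h2 h3]
  have hmono : StrictMonoOn (logRatio ρ₁ ρ₂) (Ico a₀ 1) := fun a ha b hb hab => by
    refine logRatio_lt_logRatio_of_le_right h1 h2 h3 (by linarith [ha.1]) hab hb.2 ?_
    rcases ha.1.eq_or_lt with rfl | ha₀
    · exact hbalance.le
    · linarith [logProfile_sub_lt_logProfile_sub ha₀ h1 h2 h3]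
  simp only [Msup_div_minf_eq_exp_logRatio h1 h2 h3]
  refine ⟨exp_strictMono.comp_strictAntiOn (hanti.mono Ioo_subset_Ioc_self),
    exp_strictMono.comp_strictMonoOn (hmono.mono Ioo_subset_Ico_self), fun a ha hne => ?_⟩
  rcases hne.lt_or_gt with h | h
  · exact exp_lt_exp.2 (hanti ⟨ha.1, h.le⟩ ⟨h1.trans ha₀, le_rfl⟩ h)
  · exact exp_lt_exp.2 (hmono ⟨le_rfl, ha₀'.trans h3⟩ ⟨h.le, ha.2⟩ h)
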